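/- arXiv:1102.2398 — 2 statements merged into one kernel-verified Lean document; each statement's English description precedes it below -/
import Mathlib

section
/- For every finite simple graph G on n ≥ 2 vertices, the number of spanning trees satisfies τ(G) ≤ (Tr(Δ)/n)^{n−1}, where Δ is the diagonal degree matrix of G, so Tr(Δ)/n is the average degree. -/
open Matrix
open scoped Classical

/-- Adjacency matrix of a simple graph, as a real matrix. -/
noncomputable def adjMat {n : ℕ} (G : SimpleGraph (Fin n)) : Matrix (Fin n) (Fin n) ℝ :=
  Matrix.of fun i j => if G.Adj i j then (1 : ℝ) else 0

/-- Diagonal degree matrix of a simple graph. -/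
noncomputable def degMat {n : ℕ} (G : SimpleGraph (Fin n)) : Matrix (Fin n) (Fin n) ℝ :=
  Matrix.diagonal fun i => (Nat.card (G.neighborSet i) : ℝ)

/-- Combinatorial Laplacian. -/
noncomputable def lapMat {n : ℕ} (G : SimpleGraph (Fin n)) : Matrix (Fin n) (Fin n) ℝ :=
  degMat G - adjMat G

/-- Number of spanning trees of `G`: spanning subgraphs of `G` that are trees. -/
noncomputable def numSpanningTrees {n : ℕ} (G : SimpleGraph (Fin n)) : ℕ :=
  Nat.card {H : SimpleGraph (Fin n) // H ≤ G ∧ H.IsTree}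

/-- Matrix logarithm via functional calculus (log of eigenvalues), with log 0 = 0. -/
noncomputable def matLog {n : ℕ} (M : Matrix (Fin n) (Fin n) ℝ) : Matrix (Fin n) (Fin n) ℝ :=
  if hM : M.IsHermitian then
    (hM.eigenvectorUnitary : Matrix (Fin n) (Fin n) ℝ) *
      Matrix.diagonal (fun i => Real.log (hM.eigenvalues i)) *
      star (hM.eigenvectorUnitary : Matrix (Fin n) (Fin n) ℝ)
  else 0

/-- Quantum relative entropy S(σ₁‖σ₂) = Tr(σ₁ log σ₁) − Tr(σ₁ log σ₂). -/
noncomputable def qRelEntropy {n : ℕ} (σ1 σ2 : Matrix (Fin n) (Fin n) ℝ) : ℝ :=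
  (σ1 * matLog σ1).trace - (σ1 * matLog σ2).trace

/-- Projection Π_ℓ = I − E_ℓℓ. -/
noncomputable def projP {n : ℕ} (ℓ : Fin n) : Matrix (Fin n) (Fin n) ℝ :=
  1 - Matrix.single ℓ ℓ 1

/-- Q_ℓ = E_ℓℓ. -/
noncomputable def projQ {n : ℕ} (ℓ : Fin n) : Matrix (Fin n) (Fin n) ℝ :=
  Matrix.single ℓ ℓ 1

/-- Pinching map Φ_ℓ. -/
noncomputable def pinch {n : ℕ} (ℓ : Fin n) (M : Matrix (Fin n) (Fin n) ℝ) :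
    Matrix (Fin n) (Fin n) ℝ :=
  projP ℓ * M * projP ℓ + projQ ℓ * M * projQ ℓ

/-- Maximum degree. -/
noncomputable def maxDeg {n : ℕ} (G : SimpleGraph (Fin n)) : ℕ :=
  Finset.univ.sup fun i => Nat.card (G.neighborSet i)

/-!
Root every spanning tree at a vertex `v` of maximum degree. A tree is determined by the map
sending each vertex `i ≠ v` to the next vertex on its path to `v`, and that vertex is a
`G`-neighbour of `i`; hence `τ(G) ≤ ∏_{i ≠ v} deg i`. By AM-GM this product is at most
`(m / (n - 1)) ^ (n - 1)`, where `m` is the degree sum over `i ≠ v`, and discarding a vertex of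
maximum degree does not increase the average degree: `m / (n - 1) ≤ Tr(Δ) / n`.
-/

namespace SimpleGraph

variable {V : Type*} {T H₁ H₂ : SimpleGraph V} {v i a b : V}

noncomputable def treeParent (T : SimpleGraph V) (v i : V) : V :=
  if h : T.Reachable i v then h.some.toPath.1.snd else i

theorem IsAcyclic.treeParent_eq_snd (hT : T.IsAcyclic) {p : T.Walk i v} (hp : p.IsPath) :
    treeParent T v i = p.snd := by
  have h : T.Reachable i v := ⟨p⟩
  rw [treeParent, dif_pos h, (hT.subsingleton_path i v).elim h.some.toPath ⟨p, hp⟩]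

theorem IsAcyclic.treeParent_self (hT : T.IsAcyclic) : treeParent T v v = v :=
  hT.treeParent_eq_snd Walk.IsPath.nil

theorem IsTree.adj_treeParent (hT : T.IsTree) (hi : i ≠ v) : T.Adj i (treeParent T v i) := by
  obtain ⟨p, hp⟩ := (hT.existsUnique_path i v).exists
  rw [hT.isAcyclic.treeParent_eq_snd hp]
  exact Walk.adj_snd (Walk.not_nil_of_ne hi)

theorem IsTree.treeParent_eq_or_treeParent_eq (hT : T.IsTree) (v : V) (hab : T.Adj a b) :
    treeParent T v a = b ∨ treeParent T v b = a := by
  obtain ⟨p, hp⟩ := (hT.existsUnique_path b v).exists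
  by_cases ha : a ∈ p.support
  · exact Or.inr ((hT.isAcyclic.treeParent_eq_snd hp).trans
      (hT.isAcyclic.eq_snd_of_adj_start hp hab.symm ha).symm)
  · exact Or.inl ((hT.isAcyclic.treeParent_eq_snd (hp.cons ha)).trans (Walk.snd_cons p hab))

theorem IsTree.le_of_treeParent_eq (h₁ : H₁.IsTree) (h₂ : H₂.IsTree)
    (h : ∀ i, i ≠ v → treeParent H₁ v i = treeParent H₂ v i) : H₁ ≤ H₂ := by
  have parent_edge : ∀ {a b}, H₁.Adj a b → treeParent H₁ v a = b → H₂.Adj a b := by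
    intro a b hab hp
    have ha : a ≠ v := by
      rintro rfl
      exact hab.ne (by rw [← hp, h₁.isAcyclic.treeParent_self])
    simpa [← h a ha, hp] using h₂.adj_treeParent ha
  intro a b hab
  rcases h₁.treeParent_eq_or_treeParent_eq v hab with hp | hp
  · exact parent_edge hab hp
  · exact (parent_edge hab.symm hp).symm

theorem card_isTree_le_prod_card_neighborSet [Fintype V] [DecidableEq V]
    (G : SimpleGraph V) (v : V) :
    Nat.card {H : SimpleGraph V // H ≤ G ∧ H.IsTree} ≤
      ∏ i ∈ Finset.univ.erase v, Nat.card (G.neighborSet i) := by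
  let parent (H : {H : SimpleGraph V // H ≤ G ∧ H.IsTree}) (i : {i // i ≠ v}) :
      G.neighborSet i :=
    ⟨treeParent H.1 v i, H.2.1 (H.2.2.adj_treeParent i.2)⟩
  have parent_injective : Function.Injective parent := by
    intro H₁ H₂ h
    have h' : ∀ i, i ≠ v → treeParent H₁.1 v i = treeParent H₂.1 v i :=
      fun i hi => congrArg Subtype.val (congrFun h ⟨i, hi⟩)
    exact Subtype.ext (le_antisymm (H₁.2.2.le_of_treeParent_eq H₂.2.2 h')
      (H₂.2.2.le_of_treeParent_eq H₁.2.2 fun i hi => (h' i hi).symm))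
  calc Nat.card {H : SimpleGraph V // H ≤ G ∧ H.IsTree}
      ≤ Nat.card ((i : {i // i ≠ v}) → G.neighborSet i) :=
        Nat.card_le_card_of_injective parent parent_injective
    _ = ∏ i ∈ Finset.univ.erase v, Nat.card (G.neighborSet i) := by
        rw [Nat.card_pi]
        exact (Finset.prod_subtype (Finset.univ.erase v) (fun i => by simp)
          fun i => Nat.card (G.neighborSet i)).symm

end SimpleGraph

namespace Finset

variable {ι : Type*}

theorem prod_le_sum_div_card_pow (s : Finset ι) (z : ι → ℝ) (hz : ∀ i ∈ s, 0 ≤ z i) :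
    ∏ i ∈ s, z i ≤ ((∑ i ∈ s, z i) / #s) ^ #s := by
  rcases s.eq_empty_or_nonempty with rfl | hs
  · simp
  have hcard : (0 : ℝ) < #s := by exact_mod_cast hs.card_pos
  have amgm := Real.geom_mean_le_arith_mean s (fun _ => 1) z (fun _ _ => zero_le_one)
    (by simpa using hcard) hz
  simp only [Real.rpow_one, one_mul, sum_const, nsmul_eq_mul, mul_one] at amgm
  rwa [Real.rpow_inv_le_iff_of_pos (prod_nonneg hz) (div_nonneg (sum_nonneg hz) hcard.le) hcard,
    Real.rpow_natCast] at amgm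

theorem sum_erase_div_card_le_sum_div_card {s : Finset ι} {f : ι → ℝ} [DecidableEq ι] {v : ι}
    (hv : v ∈ s) (hmax : ∀ i ∈ s, f i ≤ f v) (hs : (s.erase v).Nonempty) :
    (∑ i ∈ s.erase v, f i) / #(s.erase v) ≤ (∑ i ∈ s, f i) / #s := by
  have hrest : ∑ i ∈ s.erase v, f i ≤ #(s.erase v) * f v := by
    simpa using sum_le_card_nsmul _ f (f v) fun i hi => hmax i (mem_of_mem_erase hi)
  rw [← add_sum_erase s f hv, ← card_erase_add_one hv,
    div_le_div_iff₀ (by exact_mod_cast hs.card_pos) (by exact_mod_cast Nat.succ_pos _)]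
  push_cast
  nlinarith

end Finset

open Finset in
/-- τ(G) ≤ (Tr(Δ)/n)^{n−1}. -/
theorem numSpanningTrees_le_avgDeg_pow (n : ℕ) (hn : 2 ≤ n)
    (G : SimpleGraph (Fin n)) :
    (numSpanningTrees G : ℝ) ≤ ((degMat G).trace / n) ^ (n - 1) := by
  let d (i : Fin n) : ℝ := Nat.card (G.neighborSet i)
  have : Nonempty (Fin n) := ⟨⟨0, by omega⟩⟩
  obtain ⟨v, -, hv⟩ := exists_max_image univ d univ_nonempty
  have hcard : #(univ.erase v) = n - 1 := by simp [card_erase_of_mem]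
  have hrest : (univ.erase v).Nonempty := by rw [← card_pos, hcard]; omega
  calc (numSpanningTrees G : ℝ)
      ≤ ∏ i ∈ univ.erase v, d i := by
        unfold numSpanningTrees d
        exact_mod_cast G.card_isTree_le_prod_card_neighborSet v
    _ ≤ ((∑ i ∈ univ.erase v, d i) / #(univ.erase v)) ^ #(univ.erase v) :=
        prod_le_sum_div_card_pow _ d fun i _ => by positivity
    _ ≤ ((∑ i, d i) / #(univ : Finset (Fin n))) ^ #(univ.erase v) :=
        pow_le_pow_left₀ (by positivity)
          (sum_erase_div_card_le_sum_div_card (mem_univ v) hv hrest) _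
    _ = ((degMat G).trace / n) ^ (n - 1) := by simp [degMat, d, hcard]
end

section
/- For every finite simple graph G on n ≥ 2 vertices with no isolated vertices, the number of spanning trees satisfies τ(G) ≤ (Tr(Δ)/n)^n / (det Δ)^{1/n}, where Δ is the diagonal degree matrix of G. -/
/-!
Root a spanning tree at a vertex `m` and send every other vertex to its neighbour on the path
towards `m`. A tree is recovered from this parent map, so `τ(G) ≤ ∏_{v ≠ m} deg v`. For `m` of
maximum degree, with `A` and `g` the arithmetic and geometric means of the degrees
(`Tr Δ = n A`, `det Δ = g ^ n`), this product is `g ^ n / deg m ≤ A ^ n / g`, because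
`g ≤ A ≤ deg m` by AM–GM.
-/

open Matrix
open scoped Classical

namespace SimpleGraph.IsTree

variable {V : Type*} {H : SimpleGraph V} (hT : H.IsTree) (r : V)

/-- The neighbour of `v` on the unique path from `v` to the root `r` (and `r` itself if `v = r`). -/
noncomputable def parent (v : V) : V :=
  (hT.existsUnique_path v r).exists.choose.snd

variable {hT r}

lemma parent_eq_snd {v : V} {q : H.Walk v r} (hq : q.IsPath) : hT.parent r v = q.snd := by
  rw [parent, (hT.existsUnique_path v r).unique (hT.existsUnique_path v r).exists.choose_spec hq]

variable (hT r)

lemma parent_root : hT.parent r r = r :=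
  parent_eq_snd (q := Walk.nil) Walk.IsPath.nil

lemma adj_parent {v : V} (hv : v ≠ r) : H.Adj v (hT.parent r v) :=
  Walk.adj_snd (Walk.not_nil_of_ne hv)

lemma parent_eq_or_parent_eq_of_adj {a b : V} (hab : H.Adj a b) :
    hT.parent r a = b ∨ hT.parent r b = a := by
  obtain ⟨p, hp, -⟩ := hT.existsUnique_path a r
  by_cases hb : b ∈ p.support
  · exact .inl ((parent_eq_snd hp).trans (hT.isAcyclic.eq_snd_of_adj_start hp hab hb).symm)
  · exact .inr ((parent_eq_snd (hp.cons hb (h := hab.symm))).trans (Walk.snd_cons _ _))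

lemma eq_fromRel_parent : H = fromRel fun a b => hT.parent r a = b := by
  ext a b
  rw [fromRel_adj]
  refine ⟨fun hab => ⟨hab.ne, hT.parent_eq_or_parent_eq_of_adj r hab⟩, ?_⟩
  rintro ⟨hne, rfl | rfl⟩
  · exact hT.adj_parent r fun h => hne (by rw [h, parent_root])
  · exact (hT.adj_parent r fun h => hne (by rw [h, parent_root])).symm

end SimpleGraph.IsTree

namespace SimpleGraph

open Finset

variable {V : Type*} (G : SimpleGraph V)

noncomputable def spanningTreeParents (r : V) (T : {H : SimpleGraph V // H ≤ G ∧ H.IsTree})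
    (v : {v : V // v ≠ r}) : G.neighborSet v :=
  ⟨T.2.2.parent r v, T.2.1 (T.2.2.adj_parent r v.2)⟩

lemma spanningTreeParents_injective (r : V) : Function.Injective (G.spanningTreeParents r) := by
  rintro ⟨H₁, _, h₁⟩ ⟨H₂, _, h₂⟩ hT
  have hparent : h₁.parent r = h₂.parent r := funext fun v => by
    by_cases hv : v = r
    · rw [hv, h₁.parent_root, h₂.parent_root]
    · exact congrArg Subtype.val (congrFun hT ⟨v, hv⟩)
  refine Subtype.ext ?_
  calc H₁ = fromRel fun a b => h₁.parent r a = b := h₁.eq_fromRel_parent r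
    _ = fromRel fun a b => h₂.parent r a = b := by rw [hparent]
    _ = H₂ := (h₂.eq_fromRel_parent r).symm

lemma card_spanningTrees_le_prod_erase [Fintype V] [DecidableEq V] (r : V) :
    Nat.card {H : SimpleGraph V // H ≤ G ∧ H.IsTree} ≤
      ∏ v ∈ univ.erase r, Nat.card (G.neighborSet v) := by
  calc Nat.card {H : SimpleGraph V // H ≤ G ∧ H.IsTree}
      ≤ Nat.card (∀ v : {v : V // v ≠ r}, G.neighborSet v) :=
        Nat.card_le_card_of_injective _ (G.spanningTreeParents_injective r)
    _ = ∏ v ∈ univ.erase r, Nat.card (G.neighborSet v) := by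
        rw [Nat.card_pi]
        exact (Finset.prod_subtype (univ.erase r) (p := (· ≠ r)) (fun v => by simp)
          fun v => Nat.card (G.neighborSet v)).symm

end SimpleGraph

section AMGM

open Finset

variable {ι : Type*} [Fintype ι]

lemma prod_rpow_one_div_card_le_sum_div_card [Nonempty ι] {d : ι → ℝ} (hd : ∀ i, 0 ≤ d i) :
    (∏ i, d i) ^ ((1 : ℝ) / Fintype.card ι) ≤ (∑ i, d i) / Fintype.card ι := by
  simpa using Real.geom_mean_le_arith_mean univ (fun _ => 1) d (fun _ _ => zero_le_one)
    (by simp [Fintype.card_pos]) (fun i _ => hd i)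

lemma prod_erase_le_sum_div_card_pow_div_prod_rpow [DecidableEq ι] {d : ι → ℝ}
    (hd : ∀ i, 0 < d i) {m : ι} (hm : ∀ i, d i ≤ d m) :
    ∏ i ∈ univ.erase m, d i ≤
      ((∑ i, d i) / Fintype.card ι) ^ Fintype.card ι / (∏ i, d i) ^ ((1 : ℝ) / Fintype.card ι) := by
  have : Nonempty ι := ⟨m⟩
  set n := Fintype.card ι
  set A := (∑ i, d i) / n
  set g := (∏ i, d i) ^ ((1 : ℝ) / n)
  have hg : 0 < g := Real.rpow_pos_of_pos (prod_pos fun i _ => hd i) _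
  have hgA : g ≤ A := prod_rpow_one_div_card_le_sum_div_card fun i => (hd i).le
  have hAm : A ≤ d m := by
    rw [div_le_iff₀ (by positivity)]
    simpa [mul_comm] using sum_le_sum fun i (_ : i ∈ univ) => hm i
  have hprod : ∏ i, d i = g ^ n := by
    rw [← Real.rpow_natCast, ← Real.rpow_mul (prod_nonneg fun i _ => (hd i).le),
      one_div_mul_cancel (by positivity), Real.rpow_one]
  rw [eq_div_of_mul_eq (a := ∏ i ∈ univ.erase m, d i) (hd m).ne'
    (by rw [mul_comm, mul_prod_erase univ d (mem_univ m)]), hprod,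
    div_le_div_iff₀ (hd m) hg]
  calc g ^ n * g = g ^ (n + 1) := (pow_succ g n).symm
    _ ≤ A ^ (n + 1) := pow_le_pow_left₀ hg.le hgA _
    _ = A ^ n * A := pow_succ A n
    _ ≤ A ^ n * d m := mul_le_mul_of_nonneg_left hAm (pow_nonneg (hg.le.trans hgA) n)

end AMGM

/-- τ(G) ≤ (Tr(Δ)/n)^n / (det Δ)^{1/n}, for G with no isolated vertices. -/
theorem numSpanningTrees_le_avgDeg_div_detRoot (n : ℕ) (hn : 2 ≤ n)
    (G : SimpleGraph (Fin n)) (hdeg : ∀ i : Fin n, 0 < Nat.card (G.neighborSet i)) :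
    (numSpanningTrees G : ℝ) ≤
      ((degMat G).trace / n) ^ n / (degMat G).det ^ ((1 : ℝ) / n) := by
  have : Nonempty (Fin n) := ⟨⟨0, by omega⟩⟩
  set d : Fin n → ℝ := fun i => Nat.card (G.neighborSet i)
  obtain ⟨m, hm⟩ := Finite.exists_max d
  have htrees : (numSpanningTrees G : ℝ) ≤ ∏ i ∈ Finset.univ.erase m, d i := by
    simp only [numSpanningTrees, d]
    exact_mod_cast G.card_spanningTrees_le_prod_erase m
  have hamgm := prod_erase_le_sum_div_card_pow_div_prod_rpow
    (fun i => (Nat.cast_pos.mpr (hdeg i) : 0 < d i)) hm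
  rw [Fintype.card_fin] at hamgm
  rw [degMat, trace_diagonal, det_diagonal]
  exact htrees.trans hamgm
end
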